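/- With φ''(β) := 2^{−3}κ₀ Σ_{i=1,2,3} χᵢ(4β) on B₂⁰ = trace-zero 2×2 matrices over ℚ₂, where χ₁,χ₂,χ₃ are the indicator-weighted quadratic characters supported on S₂⁰ = {(a,2b;2c,−a): a,b,c ∈ ℤ₂} given by χ₁ = 1_{S₂⁰}(β)(−1)^{b+c}, χ₂ = 1_{S₂⁰}(β)(−1)^{a+c}, χ₃ = 1_{S₂⁰}(β)(−1)^{a+b}, the Fourier transform of φ'' with respect to the trace pairing and unramified ψ (with measure da db dc in the coordinates (a,b;c,−a)) equals 2κ₀ Σ_{i=1,2,3} 1_{eᵢ + 2M₂(ℤ₂)⁰}, where e₁ = (0 1; 1 0), e₂ = (1 1; 0 −1), e₃ = (1 0; 1 −1). -/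

import Mathlib

open MeasureTheory

/-- Trace-zero `2×2` matrices over `ℚ₂` in the coordinates `(a b; c −a) ↦ (a,b,c)`. -/
abbrev B20 : Type := Fin 3 → ℚ_[2]

/-- The coset `e + 2M₂(ℤ₂)⁰` for `e` integral, in coordinates. -/
def Ecoset (e : Fin 3 → ℚ_[2]) : Set B20 := {v | ∀ i, ‖v i - e i‖ ≤ 2⁻¹}

/-- `e₁ = (0 1; 1 0)` in coordinates. -/
noncomputable def e1 : Fin 3 → ℚ_[2] := ![0, 1, 1]
/-- `e₂ = (1 1; 0 −1)` in coordinates. -/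
noncomputable def e2 : Fin 3 → ℚ_[2] := ![1, 1, 0]
/-- `e₃ = (1 0; 1 −1)` in coordinates. -/
noncomputable def e3 : Fin 3 → ℚ_[2] := ![1, 0, 1]

/-- `(−1)^t` for a `2`-adic integer `t`, via its parity; `0` for non-integral `t`. -/
noncomputable def neg1pow (t : ℚ_[2]) : ℂ :=
  if h : ‖t‖ ≤ 1 then (-1 : ℂ) ^ ((PadicInt.toZMod (⟨t, h⟩ : ℤ_[2])).val) else 0

/-- `S₂⁰ = {(a, 2b; 2c, −a) : a,b,c ∈ ℤ₂}` in coordinates. -/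
def S0set : Set B20 := {v | ‖v 0‖ ≤ 1 ∧ ‖v 1‖ ≤ 2⁻¹ ∧ ‖v 2‖ ≤ 2⁻¹}

/-- `χ₁(β) = 1_{S₂⁰}(β)(−1)^{b+c}` for `β = (a, 2b; 2c, −a)`. -/
noncomputable def chi1 : B20 → ℂ :=
  Set.indicator S0set (fun v => neg1pow (v 1 / 2 + v 2 / 2))

/-- `χ₂(β) = 1_{S₂⁰}(β)(−1)^{a+c}`. -/
noncomputable def chi2 : B20 → ℂ :=
  Set.indicator S0set (fun v => neg1pow (v 0 + v 2 / 2))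

/-- `χ₃(β) = 1_{S₂⁰}(β)(−1)^{a+b}`. -/
noncomputable def chi3 : B20 → ℂ :=
  Set.indicator S0set (fun v => neg1pow (v 0 + v 1 / 2))

/-- The trace pairing `⟨β,β′⟩ = tr(β(β′)^ι) = −2aa′ − bc′ − cb′`. -/
noncomputable def tracePairing0 (v w : B20) : ℚ_[2] :=
  -(2 * v 0 * w 0) - v 1 * w 2 - v 2 * w 1

/-- `φ″(β) := 2⁻³ κ₀ Σᵢ χᵢ(4β)`. -/
noncomputable def phiDP (κ₀ : ℝ) (v : B20) : ℂ :=
  2⁻¹ ^ 3 * (κ₀ : ℂ) *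
    (chi1 (fun i => 4 * v i) + chi2 (fun i => 4 * v i) + chi3 (fun i => 4 * v i))

/-!
Pick `x₀` with `‖x₀‖ = 2` and `ψ x₀ = -1`; then `(-1)^t = ψ(x₀ t)` on `ℤ₂`, so with `u = 2x₀`
each `χᵢ(4β)` equals `1_{S₂⁰}(4β) ψ(-⟨u eᵢ, β⟩)`, and the transform of `β ↦ χᵢ(4β)` at `v` is the
transform of `1_{S₂⁰}(4·)` at `v - u eᵢ`. That transform factors over the three coordinates into
integrals of characters over the balls `2^{-k}ℤ₂`, each of which is the volume `2^k` of the ball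
or `0` according as the character is trivial on the ball or not. This gives
`2⁴ 1_{2M₂(ℤ₂)⁰}(v - u eᵢ)`, and `v - u eᵢ ∈ 2M₂(ℤ₂)⁰ ↔ v ∈ eᵢ + 2M₂(ℤ₂)⁰` since `u ≡ 1 mod 2`.
-/

open Metric

lemma Padic.norm_le_inv_of_norm_lt_one {p : ℕ} [Fact p.Prime] {x : ℚ_[p]} (h : ‖x‖ < 1) :
    ‖x‖ ≤ (p : ℝ)⁻¹ := by
  simpa using (norm_le_pow_iff_norm_lt_pow_add_one x (-1)).2 (by simpa using h)

lemma Padic.le_norm_mul_pow_of_one_lt {p : ℕ} [Fact p.Prime] {c : ℚ_[p]} {k : ℕ}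
    (h : 1 < ‖c‖ * (p : ℝ) ^ k) : (p : ℝ) ≤ ‖c‖ * (p : ℝ) ^ k := by
  have hc : c ≠ 0 := by rintro rfl; norm_num at h
  have hp : (1 : ℝ) < p := by exact_mod_cast (Fact.out : p.Prime).one_lt
  rw [norm_eq_zpow_neg_valuation hc, ← zpow_natCast, ← zpow_add₀ (by positivity)] at h ⊢
  calc (p : ℝ) = (p : ℝ) ^ (1 : ℤ) := (zpow_one _).symm
    _ ≤ _ := zpow_le_zpow_right₀ hp.le ((one_lt_zpow_iff_right₀ hp).1 h)

lemma PadicInt.norm_sub_toZMod_val_le {p : ℕ} [Fact p.Prime] (z : ℤ_[p]) :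
    ‖(z : ℚ_[p]) - (toZMod z).val‖ ≤ (p : ℝ)⁻¹ := by
  have h := toZMod_spec z
  rw [← ZMod.natCast_val, IsLocalRing.mem_maximalIdeal, mem_nonunits, norm_def] at h
  exact Padic.norm_le_inv_of_norm_lt_one (by simpa using h)

namespace Padic

lemma norm_two_eq : ‖(2 : ℚ_[2])‖ = 2⁻¹ := by
  simpa using norm_p (p := 2)

-- The residue field of `ℤ₂` is `𝔽₂`.
lemma norm_sub_one_le_of_norm_eq_one {x : ℚ_[2]} (h : ‖x‖ = 1) : ‖x - 1‖ ≤ 2⁻¹ := by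
  obtain ⟨n, hn, hle⟩ : ∃ n : ℕ, n < 2 ∧ ‖x - n‖ ≤ 2⁻¹ :=
    ⟨_, ZMod.val_lt _, by simpa using PadicInt.norm_sub_toZMod_val_le ⟨x, h.le⟩⟩
  interval_cases n
  · norm_num [h] at hle
  · simpa using hle

lemma closedBall_two_pow_succ_eq_union {k : ℕ} {q : ℚ_[2]} (hq : ‖q‖ = 2 ^ (k + 1)) :
    closedBall (0 : ℚ_[2]) (2 ^ (k + 1)) = closedBall 0 (2 ^ k) ∪ closedBall q (2 ^ k) := by
  have hq0 : q ≠ 0 := norm_ne_zero_iff.1 (by rw [hq]; positivity)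
  ext x
  simp only [mem_closedBall, dist_eq_norm, sub_zero, Set.mem_union]
  constructor
  · intro hx
    refine or_iff_not_imp_left.2 fun hxk ↦ ?_
    have hx' : ‖x‖ = 2 ^ (k + 1) := by
      have := (norm_le_pow_iff_norm_lt_pow_add_one x k).not.1 (by exact_mod_cast hxk)
      push_cast at this
      exact hx.antisymm (by exact_mod_cast not_lt.1 this)
    have hunit : ‖x / q - 1‖ ≤ 2⁻¹ := norm_sub_one_le_of_norm_eq_one (by simp [hx', hq])
    calc ‖x - q‖ = ‖q‖ * ‖x / q - 1‖ := by
          rw [← norm_mul, mul_sub, mul_div_cancel₀ _ hq0, mul_one]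
      _ ≤ 2 ^ (k + 1) * 2⁻¹ := by rw [hq]; gcongr
      _ = 2 ^ k := by ring
  · have hk : (2 : ℝ) ^ k ≤ 2 ^ (k + 1) := pow_le_pow_right₀ one_le_two k.le_succ
    rintro (hx | hx)
    · exact hx.trans hk
    · calc ‖x‖ = ‖(x - q) + q‖ := by rw [sub_add_cancel]
        _ ≤ max ‖x - q‖ ‖q‖ := IsUltrametricDist.norm_add_le_max _ _
        _ ≤ 2 ^ (k + 1) := max_le (hx.trans hk) hq.le

lemma disjoint_closedBall_two_pow {k : ℕ} {q : ℚ_[2]} (hq : ‖q‖ = 2 ^ (k + 1)) :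
    Disjoint (closedBall (0 : ℚ_[2]) (2 ^ k)) (closedBall q (2 ^ k)) := by
  refine Set.disjoint_left.2 fun x hx hxq ↦ ?_
  rw [mem_closedBall, dist_zero_right] at hx
  rw [mem_closedBall, dist_eq_norm] at hxq
  have hle : ‖q‖ ≤ 2 ^ k := calc
    ‖q‖ = ‖x + (q - x)‖ := by rw [add_sub_cancel]
    _ ≤ max ‖x‖ ‖q - x‖ := IsUltrametricDist.norm_add_le_max _ _
    _ ≤ 2 ^ k := max_le hx (norm_sub_rev q x ▸ hxq)
  rw [hq, pow_succ] at hle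
  linarith [pow_pos (two_pos (α := ℝ)) k]

lemma exists_isAddHaarMeasure_closedBall_eq_one {p : ℕ} [Fact p.Prime] [MeasurableSpace ℚ_[p]]
    [BorelSpace ℚ_[p]] : ∃ ν : Measure ℚ_[p], ν.IsAddHaarMeasure ∧ ν (closedBall 0 1) = 1 := by
  let K : TopologicalSpace.PositiveCompacts ℚ_[p] :=
    { carrier := closedBall 0 1
      isCompact' := isCompact_closedBall 0 1
      interior_nonempty' := by
        rw [(IsUltrametricDist.isOpen_closedBall 0 one_ne_zero).interior_eq]
        exact nonempty_closedBall.2 zero_le_one }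
  exact ⟨Measure.addHaarMeasure K, inferInstance, Measure.addHaarMeasure_self⟩

lemma measure_closedBall_two_pow [MeasurableSpace ℚ_[2]] [BorelSpace ℚ_[2]] (ν : Measure ℚ_[2])
    [ν.IsAddHaarMeasure] (hν : ν (closedBall 0 1) = 1) (k : ℕ) :
    ν (closedBall 0 (2 ^ k)) = 2 ^ k := by
  induction k with
  | zero => simpa using hν
  | succ k ih =>
    obtain ⟨q, hq⟩ : ∃ q : ℚ_[2], ‖q‖ = 2 ^ (k + 1) := ⟨2⁻¹ ^ (k + 1), by simp [norm_two_eq]⟩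
    rw [closedBall_two_pow_succ_eq_union hq,
      measure_union (disjoint_closedBall_two_pow hq) measurableSet_closedBall,
      Measure.addHaar_closedBall_center ν q, ih, pow_succ, mul_two]

end Padic

lemma AddChar.continuous_of_eq_one_of_norm_le {G M : Type*} [SeminormedAddCommGroup G] [Monoid M]
    [TopologicalSpace M] (ψ : AddChar G M) {r : ℝ} (hr : 0 < r)
    (hψ : ∀ x, ‖x‖ ≤ r → ψ x = 1) : Continuous ψ := by
  refine continuous_iff_continuousAt.2 fun x ↦ Filter.EventuallyEq.continuousAt (y := ψ x) ?_
  filter_upwards [closedBall_mem_nhds x hr] with y hy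
  have hyx : ψ (y - x) = 1 := hψ _ (by simpa [dist_eq_norm] using hy)
  rw [← add_sub_cancel x y, AddChar.map_add_eq_mul, hyx, mul_one]

lemma integral_indicator_addChar_eq_zero {G : Type*} [AddGroup G] [MeasurableSpace G]
    [MeasurableAdd G] (ν : Measure G) [ν.IsAddRightInvariant] (H : AddSubgroup G)
    (ψ : AddChar G ℂ) {y : G} (hy : y ∈ H) (hψy : ψ y ≠ 1) :
    ∫ x, (H : Set G).indicator ψ x ∂ν = 0 := by
  have hshift : ∀ x, (H : Set G).indicator ψ (x + y) = ψ y * (H : Set G).indicator ψ x := by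
    intro x
    by_cases hx : x ∈ H
    · simp [hx, H.add_mem hx hy, AddChar.map_add_eq_mul, mul_comm]
    · have hxy : x + y ∉ H := fun h ↦ hx (by simpa using H.sub_mem h hy)
      simp [hx, hxy]
  have h := integral_add_right_eq_self (μ := ν) ((H : Set G).indicator ψ) y
  simp_rw [hshift, integral_const_mul] at h
  have h' : (ψ y - 1) * ∫ x, (H : Set G).indicator ψ x ∂ν = 0 := by linear_combination h
  exact (mul_eq_zero.1 h').resolve_left (sub_ne_zero.2 hψy)

lemma MeasureTheory.Measure.eq_pi_of_isAddHaarMeasure {ι G : Type*} [Fintype ι] [AddCommGroup G]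
    [TopologicalSpace G] [IsTopologicalAddGroup G] [LocallyCompactSpace G]
    [SecondCountableTopology G] [MeasurableSpace G] [BorelSpace G]
    (μ : Measure (ι → G)) [μ.IsAddHaarMeasure] (ν : Measure G) [ν.IsAddHaarMeasure] {K : Set G}
    (hK : ν K = 1) (hμK : μ (Set.univ.pi fun _ ↦ K) = 1) : μ = Measure.pi fun _ ↦ ν := by
  have h := isAddLeftInvariant_eq_smul μ (Measure.pi fun _ ↦ ν)
  have hc : 1 = (addHaarScalarFactor μ (Measure.pi fun _ ↦ ν) : ENNReal) := by
    simpa [hK, hμK] using congrArg (· (Set.univ.pi fun _ ↦ K)) h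
  rw [h, ENNReal.coe_eq_one.1 hc.symm, one_smul]

section Character

variable (ψ : AddChar ℚ_[2] ℂ) (hψ : ∀ x : ℚ_[2], ‖x‖ ≤ 1 → ψ x = 1)
include hψ

lemma exists_norm_eq_two_addChar_eq_neg_one (h : ∃ x : ℚ_[2], ‖x‖ ≤ 2 ∧ ψ x ≠ 1) :
    ∃ x₀ : ℚ_[2], ‖x₀‖ = 2 ∧ ψ x₀ = -1 := by
  obtain ⟨x, hx2, hψx⟩ := h
  have hx : ‖x‖ = 2 := by
    refine hx2.antisymm ?_
    have := (Padic.norm_le_pow_iff_norm_lt_pow_add_one x 0).not.1 (mt (hψ x) hψx)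
    norm_num at this
    exact this
  have hsq : ψ x ^ 2 = 1 := by
    rw [← AddChar.map_nsmul_eq_pow, hψ]
    norm_num [nsmul_eq_mul, hx, Padic.norm_two_eq]
  exact ⟨x, hx, (sq_eq_one_iff.1 hsq).resolve_left hψx⟩

lemma neg1pow_eq_addChar {x₀ : ℚ_[2]} (hx₀ : ‖x₀‖ = 2) (hψx₀ : ψ x₀ = -1) {t : ℚ_[2]}
    (ht : ‖t‖ ≤ 1) : neg1pow t = ψ (x₀ * t) := by
  set n := (PadicInt.toZMod (⟨t, ht⟩ : ℤ_[2])).val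
  have hsmall : ‖x₀ * (t - n)‖ ≤ 1 := by
    rw [norm_mul, hx₀]
    linarith [PadicInt.norm_sub_toZMod_val_le (⟨t, ht⟩ : ℤ_[2])]
  calc neg1pow t = ψ x₀ ^ n := by rw [neg1pow, dif_pos ht, hψx₀]
    _ = ψ (n • x₀ + x₀ * (t - n)) := by
      rw [AddChar.map_add_eq_mul, AddChar.map_nsmul_eq_pow, hψ _ hsmall, mul_one]
    _ = ψ (x₀ * t) := by rw [nsmul_eq_mul]; ring_nf

variable [MeasurableSpace ℚ_[2]] [BorelSpace ℚ_[2]] (ν : Measure ℚ_[2]) [ν.IsAddHaarMeasure]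

lemma integrable_indicator_closedBall_mulShift (r : ℝ) (c : ℚ_[2]) :
    Integrable ((closedBall (0 : ℚ_[2]) r).indicator fun x ↦ ψ (c * x)) ν :=
  (((ψ.continuous_of_eq_one_of_norm_le one_pos hψ).comp
    (continuous_const_mul c)).continuousOn.integrableOn_compact
    (isCompact_closedBall 0 r)).integrable_indicator measurableSet_closedBall

lemma integral_indicator_closedBall_mulShift (hν : ν (closedBall 0 1) = 1)
    (hψ₂ : ∃ x : ℚ_[2], ‖x‖ ≤ 2 ∧ ψ x ≠ 1) (k : ℕ) (c : ℚ_[2]) :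
    ∫ x, (closedBall (0 : ℚ_[2]) (2 ^ k)).indicator (fun x ↦ ψ (c * x)) x ∂ν
      = if ‖c‖ * 2 ^ k ≤ 1 then 2 ^ k else 0 := by
  split_ifs with hc
  · have htriv : ∀ x ∈ closedBall (0 : ℚ_[2]) (2 ^ k), ψ (c * x) = 1 := by
      intro x hx
      rw [mem_closedBall, dist_zero_right] at hx
      refine hψ _ ?_
      rw [norm_mul]
      exact (mul_le_mul_of_nonneg_left hx (norm_nonneg c)).trans hc
    rw [Set.indicator_congr htriv, integral_indicator_const _ measurableSet_closedBall,
      measureReal_def, Padic.measure_closedBall_two_pow ν hν]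
    simp
  · obtain ⟨x₀, hx₀, hψx₀⟩ := hψ₂
    have hc0 : c ≠ 0 := by rintro rfl; simp at hc
    let H := (IsUltrametricDist.closedBall_openAddSubgroup ℚ_[2] (r := 2 ^ k)
      (by positivity)).toAddSubgroup
    refine integral_indicator_addChar_eq_zero ν H (ψ.mulShift c) (y := x₀ / c) ?_
      (by rwa [AddChar.mulShift_apply, mul_div_cancel₀ _ hc0])
    show x₀ / c ∈ closedBall 0 (2 ^ k)
    have h2 := Padic.le_norm_mul_pow_of_one_lt (p := 2) (not_le.1 (by exact_mod_cast hc))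
    rw [mem_closedBall, dist_zero_right, norm_div, div_le_iff₀ (norm_pos_iff.2 hc0)]
    push_cast at h2
    linarith

end Character

lemma four_mul_mem_S0set_iff (w : B20) :
    (fun i ↦ 4 * w i) ∈ S0set ↔ ‖w 0‖ ≤ 2 ^ 2 ∧ ‖w 1‖ ≤ 2 ^ 1 ∧ ‖w 2‖ ≤ 2 ^ 1 := by
  have h4 : ‖(4 : ℚ_[2])‖ = 4⁻¹ := by
    rw [show (4 : ℚ_[2]) = 2 * 2 by norm_num, norm_mul, Padic.norm_two_eq]; norm_num
  simp only [S0set, Set.mem_ofPred_eq, norm_mul, h4]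
  refine and_congr ?_ (and_congr ?_ ?_) <;> constructor <;> intro h <;> linarith

lemma norm_le_one_of_mem_S0set {β : B20} (h : β ∈ S0set) :
    ‖β 0‖ ≤ 1 ∧ ‖β 1 / 2‖ ≤ 1 ∧ ‖β 2 / 2‖ ≤ 1 := by
  obtain ⟨h0, h1, h2⟩ := h
  simp only [norm_div, Padic.norm_two_eq, div_inv_eq_mul]
  exact ⟨h0, by linarith, by linarith⟩

noncomputable def fourierIntegrandS0 (ψ : AddChar ℚ_[2] ℂ) (v w : B20) : ℂ :=
  S0set.indicator (fun _ ↦ (1 : ℂ)) (fun i ↦ 4 * w i) * ψ (tracePairing0 v w)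

section FourierS0

variable (ψ : AddChar ℚ_[2] ℂ)

lemma fourierIntegrandS0_eq_prod (v w : B20) :
    fourierIntegrandS0 ψ v w = ∏ j, (closedBall (0 : ℚ_[2]) (2 ^ ![2, 1, 1] j)).indicator
      (fun x ↦ ψ (![-(2 * v 0), -v 2, -v 1] j * x)) (w j) := by
  simp only [fourierIntegrandS0, Fin.prod_univ_three, Matrix.cons_val_zero, Matrix.cons_val_one,
    Matrix.cons_val_two, Matrix.head_cons, Matrix.tail_cons]
  by_cases h : (fun i ↦ 4 * w i) ∈ S0set
  · obtain ⟨h0, h1, h2⟩ := (four_mul_mem_S0set_iff w).1 h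
    simp only [Set.indicator_of_mem h, Set.indicator_of_mem (mem_closedBall_zero_iff.2 h0),
      Set.indicator_of_mem (mem_closedBall_zero_iff.2 h1),
      Set.indicator_of_mem (mem_closedBall_zero_iff.2 h2), one_mul, ← AddChar.map_add_eq_mul]
    congr 1
    simp only [tracePairing0]
    ring
  · rw [Set.indicator_of_notMem h, zero_mul]
    rw [four_mul_mem_S0set_iff, not_and_or, not_and_or] at h
    rcases h with h | h | h <;>
      simp only [Set.indicator_of_notMem (mt mem_closedBall_zero_iff.1 h), mul_zero, zero_mul]

variable (hψ : ∀ x : ℚ_[2], ‖x‖ ≤ 1 → ψ x = 1)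
  [MeasurableSpace ℚ_[2]] [BorelSpace ℚ_[2]] (ν : Measure ℚ_[2]) [ν.IsAddHaarMeasure]
include hψ

lemma integrable_fourierIntegrandS0 (v : B20) :
    Integrable (fourierIntegrandS0 ψ v) (Measure.pi fun _ ↦ ν) := by
  simp_rw [funext (fourierIntegrandS0_eq_prod ψ v)]
  exact Integrable.fintype_prod fun j ↦ integrable_indicator_closedBall_mulShift ψ hψ ν _ _

lemma integral_fourierIntegrandS0 (hν : ν (closedBall 0 1) = 1)
    (hψ₂ : ∃ x : ℚ_[2], ‖x‖ ≤ 2 ∧ ψ x ≠ 1) (v : B20) :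
    ∫ w, fourierIntegrandS0 ψ v w ∂(Measure.pi fun _ ↦ ν)
      = 16 * (Ecoset 0).indicator (fun _ ↦ (1 : ℂ)) v := by
  classical
  simp_rw [fourierIntegrandS0_eq_prod, integral_fintype_prod_eq_prod,
    integral_indicator_closedBall_mulShift ψ hψ ν hν hψ₂, Fin.prod_univ_three]
  have hc₀ : ‖-(2 * v 0)‖ * 2 ^ 2 ≤ 1 ↔ ‖v 0‖ ≤ 2⁻¹ := by
    rw [norm_neg, norm_mul, Padic.norm_two_eq]
    constructor <;> intro h <;> linarith
  have hc : ∀ i, ‖-v i‖ * 2 ^ 1 ≤ 1 ↔ ‖v i‖ ≤ 2⁻¹ := fun i ↦ by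
    rw [norm_neg]
    constructor <;> intro h <;> linarith
  have hE : v ∈ Ecoset 0 ↔ ‖v 0‖ ≤ 2⁻¹ ∧ ‖v 1‖ ≤ 2⁻¹ ∧ ‖v 2‖ ≤ 2⁻¹ := by
    simp [Ecoset, Fin.forall_fin_succ]
  simp only [Matrix.cons_val_zero, Matrix.cons_val_one, Matrix.cons_val_two, Matrix.head_cons,
    Matrix.tail_cons, hc₀, hc]
  rw [Set.indicator_apply, if_congr hE rfl rfl]
  split_ifs <;> simp_all
  norm_num

end FourierS0

section PhiDP

variable (ψ : AddChar ℚ_[2] ℂ) (hψ : ∀ x : ℚ_[2], ‖x‖ ≤ 1 → ψ x = 1)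
  {x₀ : ℚ_[2]} (hx₀ : ‖x₀‖ = 2) (hψx₀ : ψ x₀ = -1)
include hψ hx₀ hψx₀

lemma indicator_S0set_neg1pow {f : B20 → ℚ_[2]} (hf : ∀ β ∈ S0set, ‖f β‖ ≤ 1) (β : B20) :
    S0set.indicator (fun β ↦ neg1pow (f β)) β
      = S0set.indicator (fun _ ↦ (1 : ℂ)) β * ψ (x₀ * f β) := by
  by_cases h : β ∈ S0set
  · simp [h, neg1pow_eq_addChar ψ hψ hx₀ hψx₀ (hf β h)]
  · simp [h]

lemma indicator_neg1pow_mul_addChar {f : B20 → ℚ_[2]} (hf : ∀ β ∈ S0set, ‖f β‖ ≤ 1) {e : B20}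
    (hfe : ∀ w, f (fun i ↦ 4 * w i) = -(2 * tracePairing0 e w)) (v w : B20) :
    S0set.indicator (fun β ↦ neg1pow (f β)) (fun i ↦ 4 * w i) * ψ (tracePairing0 v w)
      = fourierIntegrandS0 ψ (v - (2 * x₀) • e) w := by
  rw [fourierIntegrandS0, indicator_S0set_neg1pow ψ hψ hx₀ hψx₀ hf, mul_assoc,
    ← AddChar.map_add_eq_mul, hfe]
  congr 2
  simp only [tracePairing0, Pi.sub_apply, Pi.smul_apply, smul_eq_mul]
  ring

lemma phiDP_mul_addChar (κ₀ : ℝ) (v w : B20) :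
    phiDP κ₀ w * ψ (tracePairing0 v w) = 2⁻¹ ^ 3 * κ₀ *
      (fourierIntegrandS0 ψ (v - (2 * x₀) • e1) w + fourierIntegrandS0 ψ (v - (2 * x₀) • e2) w
        + fourierIntegrandS0 ψ (v - (2 * x₀) • e3) w) := by
  have h₁ : ∀ β ∈ S0set, ‖β 1 / 2 + β 2 / 2‖ ≤ 1 := fun β h ↦ by
    obtain ⟨-, h1, h2⟩ := norm_le_one_of_mem_S0set h
    exact (IsUltrametricDist.norm_add_le_max _ _).trans (max_le h1 h2)
  have h₂ : ∀ β ∈ S0set, ‖β 0 + β 2 / 2‖ ≤ 1 := fun β h ↦ by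
    obtain ⟨h0, -, h2⟩ := norm_le_one_of_mem_S0set h
    exact (IsUltrametricDist.norm_add_le_max _ _).trans (max_le h0 h2)
  have h₃ : ∀ β ∈ S0set, ‖β 0 + β 1 / 2‖ ≤ 1 := fun β h ↦ by
    obtain ⟨h0, h1, -⟩ := norm_le_one_of_mem_S0set h
    exact (IsUltrametricDist.norm_add_le_max _ _).trans (max_le h0 h1)
  rw [phiDP, mul_assoc, add_mul, add_mul, chi1, chi2, chi3,
    indicator_neg1pow_mul_addChar ψ hψ hx₀ hψx₀ h₁ (e := e1)
      (fun w ↦ by simp [tracePairing0, e1]; ring),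
    indicator_neg1pow_mul_addChar ψ hψ hx₀ hψx₀ h₂ (e := e2)
      (fun w ↦ by simp [tracePairing0, e2]; ring),
    indicator_neg1pow_mul_addChar ψ hψ hx₀ hψx₀ h₃ (e := e3)
      (fun w ↦ by simp [tracePairing0, e3]; ring)]

end PhiDP

lemma sub_smul_mem_Ecoset_zero_iff {u : ℚ_[2]} (hu : ‖u - 1‖ ≤ 2⁻¹) {e : B20}
    (he : ∀ i, ‖e i‖ ≤ 1) (v : B20) : v - u • e ∈ Ecoset 0 ↔ v ∈ Ecoset e := by
  refine forall_congr' fun i ↦ ?_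
  have hball : closedBall (u * e i) 2⁻¹ = closedBall (e i) 2⁻¹ := by
    refine IsUltrametricDist.closedBall_eq_of_mem ?_
    rw [mem_closedBall, dist_eq_norm, ← one_sub_mul, norm_mul, norm_sub_rev]
    simpa using mul_le_mul hu (he i) (norm_nonneg _) (by norm_num)
  simpa [← dist_eq_norm] using Set.ext_iff.1 hball (v i)

theorem fourier_phiDP_general
    [MeasurableSpace ℚ_[2]] [BorelSpace ℚ_[2]]
    (μ : Measure B20) [μ.IsAddHaarMeasure]
    (hvol : μ {v : B20 | ∀ i, ‖v i‖ ≤ 1} = 1)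
    (ψ : ℚ_[2] → ℂ)
    (hψadd : ∀ x y : ℚ_[2], ψ (x + y) = ψ x * ψ y)
    (hψtriv : ∀ x : ℚ_[2], ‖x‖ ≤ 1 → ψ x = 1)
    (hψnontriv : ∃ x : ℚ_[2], ‖x‖ ≤ 2 ∧ ψ x ≠ 1)
    (κ₀ : ℝ) :
    ∀ v : B20,
      ∫ w : B20, phiDP κ₀ w * ψ (tracePairing0 v w) ∂μ
        = 2 * (κ₀ : ℂ) *
          (Set.indicator (Ecoset e1) (fun _ => (1 : ℂ)) v
            + Set.indicator (Ecoset e2) (fun _ => (1 : ℂ)) v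
            + Set.indicator (Ecoset e3) (fun _ => (1 : ℂ)) v) := by
  classical
  intro v
  let χ : AddChar ℚ_[2] ℂ := ⟨ψ, hψtriv 0 (by simp), hψadd⟩
  obtain ⟨x₀, hx₀, hχx₀⟩ := exists_norm_eq_two_addChar_eq_neg_one χ hψtriv hψnontriv
  obtain ⟨ν, _, hν⟩ := Padic.exists_isAddHaarMeasure_closedBall_eq_one (p := 2)
  have hμ : μ = Measure.pi fun _ ↦ ν :=
    μ.eq_pi_of_isAddHaarMeasure ν hν (by convert hvol; ext; simp)
  have hu : ‖2 * x₀ - 1‖ ≤ 2⁻¹ :=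
    Padic.norm_sub_one_le_of_norm_eq_one (by simp [hx₀, Padic.norm_two_eq])
  have hF : ∀ e : B20, (∀ i, ‖e i‖ ≤ 1) → ∫ w, fourierIntegrandS0 χ (v - (2 * x₀) • e) w ∂μ
      = 16 * (Ecoset e).indicator (fun _ ↦ (1 : ℂ)) v := fun e he ↦ by
    rw [hμ, integral_fourierIntegrandS0 χ hψtriv ν hν hψnontriv, Set.indicator_apply,
      Set.indicator_apply, if_congr (sub_smul_mem_Ecoset_zero_iff hu he v) rfl rfl]
  have hint : ∀ e : B20, Integrable (fourierIntegrandS0 χ (v - (2 * x₀) • e)) μ := fun e ↦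
    hμ ▸ integrable_fourierIntegrandS0 χ hψtriv ν _
  change ∫ w, phiDP κ₀ w * χ (tracePairing0 v w) ∂μ = _
  simp_rw [phiDP_mul_addChar χ hψtriv hx₀ hχx₀]
  rw [integral_const_mul, integral_add (by exact (hint e1).add (hint e2)) (hint e3),
    integral_add (hint e1) (hint e2), hF e1 (by simp [e1, Fin.forall_fin_succ]),
    hF e2 (by simp [e2, Fin.forall_fin_succ]), hF e3 (by simp [e3, Fin.forall_fin_succ])]
  ring

/-- the Fourier transform of `φ″` with respect to the trace pairing
and an unramified nontrivial character `ψ` (coordinate measure giving `ℤ₂` volume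
`1` in each coordinate) equals `2κ₀ Σᵢ 1_{eᵢ + 2M₂(ℤ₂)⁰}`. -/
theorem fourier_phiDP
    [MeasurableSpace ℚ_[2]] [BorelSpace ℚ_[2]]
    (μ : Measure B20) [μ.IsAddHaarMeasure]
    (hvol : μ {v : B20 | ∀ i, ‖v i‖ ≤ 1} = 1)
    (ψ : ℚ_[2] → ℂ)
    (hψadd : ∀ x y : ℚ_[2], ψ (x + y) = ψ x * ψ y)
    (hψtriv : ∀ x : ℚ_[2], ‖x‖ ≤ 1 → ψ x = 1)
    (hψnontriv : ∃ x : ℚ_[2], ‖x‖ ≤ 2 ∧ ψ x ≠ 1)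
    (κ₀ : ℝ) (hκ₀ : 0 < κ₀) :
    ∀ v : B20,
      ∫ w : B20, phiDP κ₀ w * ψ (tracePairing0 v w) ∂μ
        = 2 * (κ₀ : ℂ) *
          (Set.indicator (Ecoset e1) (fun _ => (1 : ℂ)) v
            + Set.indicator (Ecoset e2) (fun _ => (1 : ℂ)) v
            + Set.indicator (Ecoset e3) (fun _ => (1 : ℂ)) v) :=
  fourier_phiDP_general μ hvol ψ hψadd hψtriv hψnontriv κ₀
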